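/- arXiv:1101.0797 — 5 statements merged into one kernel-verified Lean document; each statement's English description precedes it below -/
import Mathlib

section
/- If strictly more than half of the leaves of a 1-fault NAND tree of depth n have value 1, then the root has value 1 if n is even and value 0 if n is odd. -/
/-- A complete binary NAND tree of depth `n`: leaves hold bits, each internal
node's value is the NAND of its children's values. -/
inductive NandTree : ℕ → Type where
  | leaf : Bool → NandTree 0
  | node {n : ℕ} : NandTree n → NandTree n → NandTree (n + 1)

/-- The value of (the root of) a NAND tree. -/
def NandTree.val : ∀ {n : ℕ}, NandTree n → Bool
  | _, .leaf b => b
  | _, .node l r => !(l.val && r.val)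

/-- The list of leaf values, in left-to-right order. -/
def NandTree.leaves : ∀ {n : ℕ}, NandTree n → List Bool
  | _, .leaf b => [b]
  | _, .node l r => l.leaves ++ r.leaves

/-- The tree contains no fault nodes: every internal node's two children
have equal values. -/
def NandTree.noFault : ∀ {n : ℕ}, NandTree n → Prop
  | _, .leaf _ => True
  | _, .node l r => l.val = r.val ∧ l.noFault ∧ r.noFault

/-- The quantity κ: 0 at leaves; at a trivial node, the max of the children's κ;
at a fault node, 1 plus the κ of the 0-valued child. -/
def NandTree.kappa : ∀ {n : ℕ}, NandTree n → ℕ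
  | _, .leaf _ => 0
  | _, .node l r =>
      if l.val = r.val then max l.kappa r.kappa
      else if l.val = false then 1 + l.kappa else 1 + r.kappa

/-- The 1-fault condition: κ(v) ≤ 1 at every node of the tree. -/
def NandTree.oneFault : ∀ {n : ℕ}, NandTree n → Prop
  | _, .leaf _ => True
  | _, .node l r => (NandTree.node l r).kappa ≤ 1 ∧ l.oneFault ∧ r.oneFault

/-! Induction on the tree. At a trivial node the majority of the leaves lies below one child,
whose value is then the parity value by induction, and so is the common value of both
children. At a fault node, κ ≤ 1 forces the 0-valued child to be fault-free, and a fault-free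
tree has constant leaves, which are all 0 if its value is 0 and its depth m is even. So for even
m at most half of the leaves below a fault are 1: under the majority hypothesis faults occur
only at odd m, where their value 1 is the parity value. -/

namespace NandTree

theorem length_leaves {n : ℕ} (t : NandTree n) : t.leaves.length = 2 ^ n := by
  induction t with
  | leaf => rfl
  | node l r ihl ihr => simp only [leaves, List.length_append, ihl, ihr, pow_succ, mul_two]

theorem count_true_le {n : ℕ} (t : NandTree n) : t.leaves.count true ≤ 2 ^ n :=
  t.length_leaves ▸ List.count_le_length

theorem val_node_of_ne {n : ℕ} {l r : NandTree n} (h : l.val ≠ r.val) :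
    (node l r).val = true := by
  cases hl : l.val <;> cases hr : r.val <;> simp_all [val]

theorem noFault_of_kappa_eq_zero {n : ℕ} {t : NandTree n} (h : t.kappa = 0) : t.noFault := by
  induction t with
  | leaf => trivial
  | node l r ihl ihr =>
    unfold kappa at h
    split_ifs at h with hv
    · exact ⟨hv, ihl (by omega), ihr (by omega)⟩
    all_goals omega

theorem noFault.leaves_eq_replicate {n : ℕ} {t : NandTree n} (h : t.noFault) :
    t.leaves = List.replicate (2 ^ n) (t.val == decide (n % 2 = 0)) := by
  induction t with
  | leaf b => cases b <;> rfl
  | @node m l r ihl ihr =>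
    obtain ⟨hv, hl, hr⟩ := h
    rw [leaves, ihl hl, ihr hr, ← hv, ← List.replicate_add, ← two_mul, ← pow_succ']
    simp only [val, ← hv, Bool.and_self]
    cases l.val <;> rcases Nat.mod_two_eq_zero_or_one m with hm | hm <;>
      simp [hm, Nat.succ_mod_two_eq_zero_iff]

theorem count_true_eq_zero_of_kappa_eq_zero {n : ℕ} {t : NandTree n} (hk : t.kappa = 0)
    (hv : t.val = false) (hn : n % 2 = 0) : t.leaves.count true = 0 := by
  simp [(noFault_of_kappa_eq_zero hk).leaves_eq_replicate, List.count_replicate, hv, hn]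

theorem odd_of_fault_of_majority {m : ℕ} {l r : NandTree m} (hk : (node l r).kappa ≤ 1)
    (hv : l.val ≠ r.val) (hmaj : 2 ^ (m + 1) < 2 * (node l r).leaves.count true) :
    m % 2 = 1 := by
  by_contra hm
  replace hm : m % 2 = 0 := by omega
  rw [leaves, List.count_append, pow_succ] at hmaj
  simp only [kappa, if_neg hv] at hk
  cases hl : l.val
  · have := count_true_eq_zero_of_kappa_eq_zero (by simp_all) hl hm
    have := r.count_true_le
    omega
  · have hr : r.val = false := by simpa [hl] using Ne.symm hv
    have := count_true_eq_zero_of_kappa_eq_zero (by simp_all) hr hm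
    have := l.count_true_le
    omega

end NandTree

/-- If strictly more than half of the leaves of a 1-fault NAND tree of
depth n have value 1, the root has value 1 for even n and 0 for odd n. -/
theorem oneFault_majority_true {n : ℕ} (t : NandTree n) (h1 : t.oneFault)
    (hmaj : 2 ^ n < 2 * t.leaves.count true) :
    t.val = decide (n % 2 = 0) := by
  induction t with
  | leaf b => cases b <;> simp_all [NandTree.leaves, NandTree.val]
  | @node m l r ihl ihr =>
    obtain ⟨hk, hl, hr⟩ := h1
    by_cases hv : l.val = r.val
    · have hval : l.val = decide (m % 2 = 0) := by
        rw [NandTree.leaves, List.count_append, pow_succ] at hmaj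
        by_cases hmaj_l : 2 ^ m < 2 * l.leaves.count true
        · exact ihl hl hmaj_l
        · exact hv ▸ ihr hr (by omega)
      rcases Nat.mod_two_eq_zero_or_one m with hm | hm <;>
        simp [NandTree.val, ← hv, hval, hm, Nat.succ_mod_two_eq_zero_iff]
    · simp [NandTree.val_node_of_ne hv, Nat.succ_mod_two_eq_zero_iff,
        NandTree.odd_of_fault_of_majority hk hv hmaj]
end

section
/- In a NAND tree of depth n where every path from root to leaf passes through exactly one fault node, and all fault nodes occur at the same depth d (height h = n - d), the root value equals parity(n - h + 1) = (n - h + 1) mod 2. -/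
/-- Every root-to-leaf path passes through exactly one fault node, and all
fault nodes are at height `h` (the fault nodes root subtrees of depth h). -/
def NandTree.uniformFaultHeight : ∀ {n : ℕ}, NandTree n → ℕ → Prop
  | 0, _, _ => False
  | n + 1, .node l r, h =>
      if h = n + 1 then l.val ≠ r.val ∧ l.noFault ∧ r.noFault
      else l.val = r.val ∧ l.uniformFaultHeight h ∧ r.uniformFaultHeight h


lemma NandTree.uniformFaultHeight_le {n h : ℕ} (t : NandTree n)
    (ht : t.uniformFaultHeight h) : h ≤ n := by
  induction t with
  | leaf b => exact absurd ht id
  | node l r ihl ihr =>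
    rename_i m
    simp only [NandTree.uniformFaultHeight] at ht
    by_cases hc : h = m + 1
    · omega
    · rw [if_neg hc] at ht
      have := ihl ht.2.1
      omega

/-- If every path from root to leaf in a depth-n NAND tree passes through
exactly one fault node and all faults are at height h, then the root value
is parity(n - h + 1). -/
theorem uniformFaultHeight_val {n h : ℕ} (t : NandTree n)
    (ht : t.uniformFaultHeight h) :
    t.val = decide ((n - h + 1) % 2 = 1) := by
  induction t with
  | leaf b => exact absurd ht id
  | node l r ihl ihr =>
    rename_i m
    simp only [NandTree.uniformFaultHeight] at ht
    by_cases hc : h = m + 1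
    · rw [if_pos hc] at ht
      obtain ⟨hne, -, -⟩ := ht
      have hval : (l.val && r.val) = false := by
        rcases Bool.eq_false_or_eq_true l.val with e | e <;>
          rcases Bool.eq_false_or_eq_true r.val with f | f <;>
          simp [e, f] at hne ⊢
      simp [NandTree.val, hval, hc]
    · rw [if_neg hc] at ht
      obtain ⟨heq, hl, hr⟩ := ht
      have hle := l.uniformFaultHeight_le hl
      have hlv := ihl hl
      have : m + 1 - h + 1 = (m - h + 1) + 1 := by omega
      rw [this]
      simp only [NandTree.val, ← heq, Bool.and_self, hlv]
      rcases Nat.even_or_odd (m - h + 1) with he | ho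
      · have h1 : (m - h + 1) % 2 = 0 := Nat.even_iff.mp he
        have h2 : (m - h + 1 + 1) % 2 = 1 := by omega
        simp [h1, h2]
      · have h1 : (m - h + 1) % 2 = 1 := Nat.odd_iff.mp ho
        have h2 : (m - h + 1 + 1) % 2 = 0 := by omega
        simp [h1, h2]
end

section
/- Let v be a fault node at height h in a NAND tree such that no descendant of v is a fault. Then there is a bit b such that the first 2^{h-1} leaves descending from v (in left-to-right order) all have value b and the remaining 2^{h-1} leaves descending from v all have value NOT b, or vice versa: exactly one child's subtree has all leaves equal to 0 and the other child's subtree has all leaves equal to some common value. -/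
def flipIter : ℕ → Bool → Bool
  | 0, b => b
  | n + 1, b => !(flipIter n b)

lemma flipIter_not (n : ℕ) (b : Bool) : flipIter n (!b) = !(flipIter n b) := by
  induction n with
  | zero => rfl
  | succ n ih => simp [flipIter, ih]

lemma noFault_leaves : ∀ {n : ℕ} (t : NandTree n), t.noFault →
    ∀ a ∈ t.leaves, a = flipIter n t.val := by
  intro n t
  induction t with
  | leaf b => intro _ a ha; simpa [NandTree.leaves, NandTree.val, flipIter] using ha
  | @node n l r ihl ihr =>
      rintro ⟨hv, hl, hr⟩ a ha
      simp only [NandTree.leaves, List.mem_append] at ha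
      have hval : (NandTree.node l r).val = !l.val := by
        simp [NandTree.val, ← hv]
      rcases ha with ha | ha
      · rw [ihl hl a ha, hval, flipIter_not, flipIter, Bool.not_not]
      · rw [ihr hr a ha, hval, hv, flipIter_not, flipIter, Bool.not_not]

/-- Let v be a fault node (at height m+1) none of whose descendants is a
fault. Then there is a bit b with all leaves of one child's subtree (the
first 2^m leaves under v) equal to b and all leaves of the other child's
subtree equal to ¬b. -/
theorem fault_no_descendant_faults_leaves {m : ℕ} (l r : NandTree m)
    (hfault : l.val ≠ r.val) (hl : l.noFault) (hr : r.noFault) :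
    ∃ b : Bool, (∀ a ∈ l.leaves, a = b) ∧ (∀ a ∈ r.leaves, a = !b) := by
  refine ⟨flipIter m l.val, fun a ha => noFault_leaves l hl a ha, fun a ha => ?_⟩
  have hrv : r.val = !l.val := by
    cases hx : l.val <;> cases hy : r.val <;> simp_all
  rw [noFault_leaves r hr a ha, hrv, flipIter_not]
end

section
/- Let x satisfy the Haar promise with parameter h* ∈ {1,...,n}, and let ξ_x ∈ R^{2^n} have entries (-1)^{x_i}. Then for every h ∈ {1,...,n} with h ≠ h* and every l ∈ {1,...,2^{n-h}}, the inner product ⟨ξ_x, ψ_{h,l}⟩ = 0, and also ⟨ξ_x, φ_0⟩ = 0 where φ_0 is the all-ones vector. Consequently, measuring ξ_x in the Haar basis yields an outcome ψ_{h,l} with h = h* with certainty. -/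
open Finset

/-- The Haar step function: 1 on [0,1/2), -1 on [1/2,1), 0 elsewhere. -/
noncomputable def haarStep (t : ℝ) : ℝ :=
  if 0 ≤ t ∧ t < 1 / 2 then 1 else if 1 / 2 ≤ t ∧ t < 1 then -1 else 0

/-- The un-normalized Haar wavelet vector ψ_{h,l} ∈ ℝ^{2^n}, with
entries (ψ_{h,l})_i = ψ(2^{-h} i - (l - 1)). -/
noncomputable def haarPsi (n h l : ℕ) : Fin (2 ^ n) → ℝ :=
  fun i => haarStep ((i : ℝ) / 2 ^ h - ((l : ℝ) - 1))

/-- The Haar promise with parameter h* ∈ {1,…,n}: there exist bits b_l,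
l ∈ {1,…,2^{n-h*}}, with x_i = b_l for 2^{h*}(l-1) ≤ i < 2^{h*}(l-1/2) and
x_i = ¬ b_l for 2^{h*}(l-1/2) ≤ i < 2^{h*} l (inequalities cleared of the
factor 1/2 by doubling). -/
def HaarPromise (n h : ℕ) (x : Fin (2 ^ n) → Bool) : Prop :=
  1 ≤ h ∧ h ≤ n ∧ ∃ b : ℕ → Bool, ∀ l, 1 ≤ l → l ≤ 2 ^ (n - h) →
    ∀ i : Fin (2 ^ n),
      (2 ^ h * (l - 1) ≤ (i : ℕ) ∧ 2 * (i : ℕ) < 2 ^ h * (2 * l - 1) →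
        x i = b l) ∧
      (2 ^ h * (2 * l - 1) ≤ 2 * (i : ℕ) ∧ (i : ℕ) < 2 ^ h * l →
        x i = !(b l))

/-- The vector ξ_x ∈ ℝ^{2^n} with entries (-1)^{x_i}. -/
noncomputable def xiVec (n : ℕ) (x : Fin (2 ^ n) → Bool) : Fin (2 ^ n) → ℝ :=
  fun i => if x i then -1 else 1

/- ### Auxiliary lemmas -/

lemma aux_le {c r : ℕ} (hr : r < c) (a m : ℕ) : c * a ≤ c * m + r ↔ a ≤ m := by
  constructor
  · intro H
    by_contra hc'
    push_neg at hc'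
    have h2 : c * m + c ≤ c * a := by
      rw [← Nat.mul_succ]
      exact Nat.mul_le_mul_left c hc'
    omega
  · intro H
    have h2 : c * a ≤ c * m := Nat.mul_le_mul_left c H
    omega

lemma aux_lt {c r : ℕ} (hr : r < c) (a m : ℕ) : c * m + r < c * a ↔ m < a := by
  rw [← not_le, aux_le hr, not_le]

lemma sum_range_mul' (f : ℕ → ℝ) (a b : ℕ) :
    ∑ i ∈ range (a * b), f i = ∑ m ∈ range a, ∑ r ∈ range b, f (b * m + r) := by
  induction a with
  | zero => simp
  | succ a ih =>
      rw [Nat.succ_mul, Finset.sum_range_add, ih, Finset.sum_range_succ]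
      congr 1
      apply Finset.sum_congr rfl
      intro r _
      congr 1
      ring

lemma haarStep_nat (k l' i : ℕ) :
    haarStep ((i : ℝ) / 2 ^ (k + 1) - (l' : ℝ)) =
      if 2 ^ k * (2 * l') ≤ i ∧ i < 2 ^ k * (2 * l' + 1) then 1
      else if 2 ^ k * (2 * l' + 1) ≤ i ∧ i < 2 ^ k * (2 * l' + 2) then -1 else 0 := by
  have hc : (0:ℝ) < 2 ^ (k + 1) := by positivity
  have e1 : (0 ≤ (i : ℝ) / 2 ^ (k + 1) - (l' : ℝ)) ↔ (2 ^ k * (2 * l') ≤ i) := by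
    rw [sub_nonneg, le_div_iff₀ hc,
      show ((l' : ℝ) * 2 ^ (k + 1)) = ((2 ^ k * (2 * l') : ℕ) : ℝ) by push_cast; ring,
      Nat.cast_le]
  have e2 : ((i : ℝ) / 2 ^ (k + 1) - (l' : ℝ) < 1 / 2) ↔ (i < 2 ^ k * (2 * l' + 1)) := by
    rw [sub_lt_iff_lt_add, div_lt_iff₀ hc,
      show ((1 / 2 + (l' : ℝ)) * 2 ^ (k + 1)) = ((2 ^ k * (2 * l' + 1) : ℕ) : ℝ) by
        push_cast; ring,
      Nat.cast_lt]
  have e3 : (1 / 2 ≤ (i : ℝ) / 2 ^ (k + 1) - (l' : ℝ)) ↔ (2 ^ k * (2 * l' + 1) ≤ i) := by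
    rw [le_sub_iff_add_le, le_div_iff₀ hc,
      show ((1 / 2 + (l' : ℝ)) * 2 ^ (k + 1)) = ((2 ^ k * (2 * l' + 1) : ℕ) : ℝ) by
        push_cast; ring,
      Nat.cast_le]
  have e4 : ((i : ℝ) / 2 ^ (k + 1) - (l' : ℝ) < 1) ↔ (i < 2 ^ k * (2 * l' + 2)) := by
    rw [sub_lt_iff_lt_add, div_lt_iff₀ hc,
      show ((1 + (l' : ℝ)) * 2 ^ (k + 1)) = ((2 ^ k * (2 * l' + 2) : ℕ) : ℝ) by
        push_cast; ring,
      Nat.cast_lt]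
  unfold haarStep
  simp only [e1, e2, e3, e4]

lemma haarStep_block (k l' M r : ℕ) (hr : r < 2 ^ k) :
    haarStep (((2 ^ k * M + r : ℕ) : ℝ) / 2 ^ (k + 1) - (l' : ℝ)) =
      if M = 2 * l' then 1 else if M = 2 * l' + 1 then -1 else 0 := by
  rw [haarStep_nat k l' (2 ^ k * M + r)]
  simp only [aux_le hr, aux_lt hr]
  split_ifs <;> first | rfl | omega

lemma sum_haar_fullblock (k l' M : ℕ) :
    ∑ r ∈ range (2 ^ k + 2 ^ k),
      haarStep (((2 ^ (k + 1) * M + r : ℕ) : ℝ) / 2 ^ (k + 1) - (l' : ℝ)) = 0 := by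
  rw [Finset.sum_range_add]
  have e1 : ∑ r ∈ range (2 ^ k),
      haarStep (((2 ^ (k + 1) * M + r : ℕ) : ℝ) / 2 ^ (k + 1) - (l' : ℝ))
      = ∑ _r ∈ range (2 ^ k), (if M = l' then (1:ℝ) else 0) := by
    apply Finset.sum_congr rfl
    intro r hr
    rw [show 2 ^ (k + 1) * M + r = 2 ^ k * (2 * M) + r by ring,
      haarStep_block k l' (2 * M) r (mem_range.mp hr)]
    split_ifs <;> first | rfl | omega
  have e2 : ∑ r ∈ range (2 ^ k),
      haarStep (((2 ^ (k + 1) * M + (2 ^ k + r) : ℕ) : ℝ) / 2 ^ (k + 1) - (l' : ℝ))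
      = ∑ _r ∈ range (2 ^ k), (if M = l' then (-1:ℝ) else 0) := by
    apply Finset.sum_congr rfl
    intro r hr
    rw [show 2 ^ (k + 1) * M + (2 ^ k + r) = 2 ^ k * (2 * M + 1) + r by ring,
      haarStep_block k l' (2 * M + 1) r (mem_range.mp hr)]
    split_ifs <;> first | rfl | omega
  rw [e1, e2, Finset.sum_const, Finset.sum_const, card_range]
  split_ifs <;> simp

/-- Totalization of ξ to a function on ℕ. -/
noncomputable def xiN (n : ℕ) (x : Fin (2 ^ n) → Bool) (j : ℕ) : ℝ :=
  if hj : j < 2 ^ n then xiVec n x ⟨j, hj⟩ else 0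

lemma xi_val (n h1 : ℕ) (x : Fin (2 ^ n) → Bool) (b : ℕ → Bool)
    (hb : ∀ l, 1 ≤ l → l ≤ 2 ^ (n - h1) → ∀ i : Fin (2 ^ n),
      (2 ^ h1 * (l - 1) ≤ (i : ℕ) ∧ 2 * (i : ℕ) < 2 ^ h1 * (2 * l - 1) → x i = b l) ∧
      (2 ^ h1 * (2 * l - 1) ≤ 2 * (i : ℕ) ∧ (i : ℕ) < 2 ^ h1 * l → x i = !(b l)))
    (hh1 : 1 ≤ h1) (hn : h1 ≤ n) (q s : ℕ) (hq : q < 2 ^ (n - h1)) (hs : s < 2 ^ h1) :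
    xiN n x (2 ^ h1 * q + s) =
      (if s < 2 ^ (h1 - 1) then 1 else -1) * (if b (q + 1) then -1 else 1) := by
  have hpow : 2 ^ h1 * 2 ^ (n - h1) = 2 ^ n := by
    rw [← pow_add]; congr 1; omega
  have hmul : 2 ^ h1 * (q + 1) ≤ 2 ^ n := by
    rw [← hpow]; exact Nat.mul_le_mul_left _ hq
  have hsucc : 2 ^ h1 * (q + 1) = 2 ^ h1 * q + 2 ^ h1 := by ring
  have hlt : 2 ^ h1 * q + s < 2 ^ n :=
    lt_of_lt_of_le (by rw [hsucc]; exact Nat.add_lt_add_left hs _) hmul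
  have h2 : 2 ^ h1 = 2 * 2 ^ (h1 - 1) := by
    conv_lhs => rw [show h1 = (h1 - 1) + 1 by omega]
    rw [pow_succ']
  obtain ⟨hb1, hb2⟩ := hb (q + 1) (by omega) hq ⟨2 ^ h1 * q + s, hlt⟩
  unfold xiN
  rw [dif_pos hlt]
  unfold xiVec
  by_cases hcase : s < 2 ^ (h1 - 1)
  · have hx1 : x ⟨2 ^ h1 * q + s, hlt⟩ = b (q + 1) := by
      apply hb1
      refine ⟨?_, ?_⟩
      · show 2 ^ h1 * (q + 1 - 1) ≤ 2 ^ h1 * q + s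
        rw [Nat.add_sub_cancel]
        exact Nat.le_add_right _ _
      · show 2 * (2 ^ h1 * q + s) < 2 ^ h1 * (2 * (q + 1) - 1)
        rw [show 2 * (q + 1) - 1 = 2 * q + 1 by omega]
        calc 2 * (2 ^ h1 * q + s) = 2 ^ h1 * (2 * q) + 2 * s := by ring
          _ < 2 ^ h1 * (2 * q) + 2 ^ h1 := Nat.add_lt_add_left (by omega) _
          _ = 2 ^ h1 * (2 * q + 1) := by ring
    rw [hx1, if_pos hcase]
    cases hbq : b (q + 1) <;> simp
  · have hx1 : x ⟨2 ^ h1 * q + s, hlt⟩ = !(b (q + 1)) := by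
      apply hb2
      refine ⟨?_, ?_⟩
      · show 2 ^ h1 * (2 * (q + 1) - 1) ≤ 2 * (2 ^ h1 * q + s)
        rw [show 2 * (q + 1) - 1 = 2 * q + 1 by omega]
        calc 2 ^ h1 * (2 * q + 1) = 2 ^ h1 * (2 * q) + 2 ^ h1 := by ring
          _ ≤ 2 ^ h1 * (2 * q) + 2 * s := Nat.add_le_add_left (by omega) _
          _ = 2 * (2 ^ h1 * q + s) := by ring
      · show 2 ^ h1 * q + s < 2 ^ h1 * (q + 1)
        rw [hsucc]
        exact Nat.add_lt_add_left hs _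
    rw [hx1, if_neg hcase]
    cases hbq : b (q + 1) <;> simp

lemma xi_block_sum (n h1 : ℕ) (x : Fin (2 ^ n) → Bool) (b : ℕ → Bool)
    (hb : ∀ l, 1 ≤ l → l ≤ 2 ^ (n - h1) → ∀ i : Fin (2 ^ n),
      (2 ^ h1 * (l - 1) ≤ (i : ℕ) ∧ 2 * (i : ℕ) < 2 ^ h1 * (2 * l - 1) → x i = b l) ∧
      (2 ^ h1 * (2 * l - 1) ≤ 2 * (i : ℕ) ∧ (i : ℕ) < 2 ^ h1 * l → x i = !(b l)))
    (hh1 : 1 ≤ h1) (hn : h1 ≤ n) (q : ℕ) (hq : q < 2 ^ (n - h1)) :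
    ∑ s ∈ range (2 ^ h1), xiN n x (2 ^ h1 * q + s) = 0 := by
  have h2 : 2 ^ h1 = 2 ^ (h1 - 1) + 2 ^ (h1 - 1) := by
    conv_lhs => rw [show h1 = (h1 - 1) + 1 by omega]
    rw [pow_succ]
    omega
  rw [show range (2 ^ h1) = range (2 ^ (h1 - 1) + 2 ^ (h1 - 1)) by rw [← h2],
    Finset.sum_range_add]
  have e1 : ∀ r ∈ range (2 ^ (h1 - 1)), xiN n x (2 ^ h1 * q + r)
      = (if b (q + 1) then (-1:ℝ) else 1) := by
    intro r hr
    have hr' := mem_range.mp hr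
    rw [xi_val n h1 x b hb hh1 hn q r hq (by omega), if_pos hr', one_mul]
  have e2 : ∀ r ∈ range (2 ^ (h1 - 1)), xiN n x (2 ^ h1 * q + (2 ^ (h1 - 1) + r))
      = -(if b (q + 1) then (-1:ℝ) else 1) := by
    intro r hr
    have hr' := mem_range.mp hr
    rw [xi_val n h1 x b hb hh1 hn q (2 ^ (h1 - 1) + r) hq (by omega),
      if_neg (by omega)]
    ring
  rw [Finset.sum_congr rfl e1, Finset.sum_congr rfl e2, Finset.sum_const,
    Finset.sum_const, card_range]
  simp

/-- If x satisfies the Haar promise with parameter h*, then ξ_x is orthogonal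
to every Haar wavelet vector ψ_{h,l} with h ≠ h*, and to the all-ones
vector φ_0. -/
theorem xiVec_orthogonal_wrong_level (n hstar : ℕ) (x : Fin (2 ^ n) → Bool)
    (hx : HaarPromise n hstar x) :
    (∀ h l, 1 ≤ h → h ≤ n → h ≠ hstar → 1 ≤ l → l ≤ 2 ^ (n - h) →
      ∑ i : Fin (2 ^ n), xiVec n x i * haarPsi n h l i = 0) ∧
    ∑ i : Fin (2 ^ n), xiVec n x i * 1 = 0 := by
  obtain ⟨hh1, hh1n, b, hb⟩ := hx
  constructor
  · intro h l hh hhn hne hl1 hl2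
    have hkey : ∑ i : Fin (2 ^ n), xiVec n x i * haarPsi n h l i
        = ∑ j ∈ range (2 ^ n),
            xiN n x j * haarStep ((j : ℝ) / 2 ^ h - ((l - 1 : ℕ) : ℝ)) := by
      rw [← Fin.sum_univ_eq_sum_range
        (fun j => xiN n x j * haarStep ((j : ℝ) / 2 ^ h - ((l - 1 : ℕ) : ℝ)))]
      apply Finset.sum_congr rfl
      intro i _
      congr 1
      · simp [xiN, i.isLt]
      · unfold haarPsi
        congr 1
        rw [Nat.cast_sub hl1, Nat.cast_one]
    rw [hkey]
    rcases lt_or_gt_of_ne hne with hlt | hgt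
    · -- h < hstar
      obtain ⟨k, rfl⟩ : ∃ k, h = k + 1 := ⟨h - 1, by omega⟩
      have E1 : (2:ℕ) ^ n = (2 ^ (n - hstar) * 2 ^ (hstar - (k + 1))) * 2 ^ (k + 1) := by
        rw [← pow_add, ← pow_add]; congr 1; omega
      rw [E1, sum_range_mul', sum_range_mul']
      apply Finset.sum_eq_zero; intro q hq
      apply Finset.sum_eq_zero; intro m hm
      rw [mem_range] at hq hm
      have hsplit : ∀ r : ℕ, 2 ^ (k + 1) * (2 ^ (hstar - (k + 1)) * q + m) + r
          = 2 ^ hstar * q + (2 ^ (k + 1) * m + r) := by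
        intro r
        rw [show (2:ℕ) ^ hstar = 2 ^ (k + 1) * 2 ^ (hstar - (k + 1)) by
          rw [← pow_add]; congr 1; omega]
        ring
      have hterm : ∀ r ∈ range (2 ^ (k + 1)),
          xiN n x (2 ^ (k + 1) * (2 ^ (hstar - (k + 1)) * q + m) + r) *
            haarStep (((2 ^ (k + 1) * (2 ^ (hstar - (k + 1)) * q + m) + r : ℕ) : ℝ)
              / 2 ^ (k + 1) - ((l - 1 : ℕ) : ℝ))
          = ((if m < 2 ^ (hstar - 1 - (k + 1)) then (1:ℝ) else -1) *
              (if b (q + 1) then -1 else 1)) *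
            haarStep (((2 ^ (k + 1) * (2 ^ (hstar - (k + 1)) * q + m) + r : ℕ) : ℝ)
              / 2 ^ (k + 1) - ((l - 1 : ℕ) : ℝ)) := by
        intro r hr
        have hr' := mem_range.mp hr
        congr 1
        have hs' : 2 ^ (k + 1) * m + r < 2 ^ hstar := by
          have b1 : 2 ^ (k + 1) * m + r < 2 ^ (k + 1) * (m + 1) := by
            rw [Nat.mul_succ]; exact Nat.add_lt_add_left hr' _
          have b2 : 2 ^ (k + 1) * (m + 1) ≤ 2 ^ (k + 1) * 2 ^ (hstar - (k + 1)) :=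
            Nat.mul_le_mul_left _ hm
          have b3 : 2 ^ (k + 1) * 2 ^ (hstar - (k + 1)) = 2 ^ hstar := by
            rw [← pow_add]; congr 1; omega
          exact lt_of_lt_of_le b1 (le_trans b2 (le_of_eq b3))
        rw [hsplit r, xi_val n hstar x b hb hh1 hh1n q (2 ^ (k + 1) * m + r) hq hs']
        congr 1
        have hiff : (2 ^ (k + 1) * m + r < 2 ^ (hstar - 1)) ↔
            (m < 2 ^ (hstar - 1 - (k + 1))) := by
          rw [show (2:ℕ) ^ (hstar - 1) = 2 ^ (k + 1) * 2 ^ (hstar - 1 - (k + 1)) by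
            rw [← pow_add]; congr 1; omega]
          exact aux_lt hr' _ _
        exact if_congr hiff rfl rfl
      rw [Finset.sum_congr rfl hterm, ← Finset.mul_sum]
      have hz : ∑ r ∈ range (2 ^ (k + 1)),
          haarStep (((2 ^ (k + 1) * (2 ^ (hstar - (k + 1)) * q + m) + r : ℕ) : ℝ)
            / 2 ^ (k + 1) - ((l - 1 : ℕ) : ℝ)) = 0 := by
        rw [show range ((2:ℕ) ^ (k + 1)) = range (2 ^ k + 2 ^ k) by
          congr 1; rw [pow_succ]; omega]
        exact sum_haar_fullblock k (l - 1) _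
      rw [hz, mul_zero]
    · -- hstar < h
      obtain ⟨k, rfl⟩ : ∃ k, h = k + 1 := ⟨h - 1, by omega⟩
      have hsk : hstar ≤ k := by omega
      have E1 : (2:ℕ) ^ n = 2 ^ (n - k) * 2 ^ k := by
        rw [← pow_add]; congr 1; omega
      rw [E1, sum_range_mul']
      apply Finset.sum_eq_zero; intro M hM
      rw [mem_range] at hM
      have hterm : ∀ r ∈ range (2 ^ k),
          xiN n x (2 ^ k * M + r) *
            haarStep (((2 ^ k * M + r : ℕ) : ℝ) / 2 ^ (k + 1) - ((l - 1 : ℕ) : ℝ))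
          = xiN n x (2 ^ k * M + r) *
            (if M = 2 * (l - 1) then (1:ℝ) else if M = 2 * (l - 1) + 1 then -1 else 0) := by
        intro r hr
        rw [haarStep_block k (l - 1) M r (mem_range.mp hr)]
      rw [Finset.sum_congr rfl hterm, ← Finset.sum_mul]
      have hz : ∑ r ∈ range (2 ^ k), xiN n x (2 ^ k * M + r) = 0 := by
        rw [show range ((2:ℕ) ^ k) = range (2 ^ (k - hstar) * 2 ^ hstar) by
          congr 1; rw [← pow_add]; congr 1; omega]
        rw [sum_range_mul']
        apply Finset.sum_eq_zero; intro u hu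
        rw [mem_range] at hu
        have harg : ∀ s ∈ range (2 ^ hstar), xiN n x (2 ^ k * M + (2 ^ hstar * u + s))
            = xiN n x (2 ^ hstar * (2 ^ (k - hstar) * M + u) + s) := by
          intro s _
          congr 1
          rw [show (2:ℕ) ^ k = 2 ^ hstar * 2 ^ (k - hstar) by
            rw [← pow_add]; congr 1; omega]
          ring
        rw [Finset.sum_congr rfl harg]
        apply xi_block_sum n hstar x b hb hh1 hh1n
        have b1 : 2 ^ (k - hstar) * M + u < 2 ^ (k - hstar) * (M + 1) := by
          rw [Nat.mul_succ]; exact Nat.add_lt_add_left hu _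
        have b2 : 2 ^ (k - hstar) * (M + 1) ≤ 2 ^ (k - hstar) * 2 ^ (n - k) :=
          Nat.mul_le_mul_left _ hM
        have b3 : 2 ^ (k - hstar) * 2 ^ (n - k) = 2 ^ (n - hstar) := by
          rw [← pow_add]; congr 1; omega
        exact lt_of_lt_of_le b1 (le_trans b2 (le_of_eq b3))
      rw [hz, zero_mul]
  · have hkey : ∑ i : Fin (2 ^ n), xiVec n x i * 1 = ∑ j ∈ range (2 ^ n), xiN n x j := by
      rw [← Fin.sum_univ_eq_sum_range (fun j => xiN n x j)]
      apply Finset.sum_congr rfl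
      intro i _
      rw [mul_one]
      simp [xiN, i.isLt]
    rw [hkey, show (2:ℕ) ^ n = 2 ^ (n - hstar) * 2 ^ hstar by
      rw [← pow_add]; congr 1; omega, sum_range_mul']
    apply Finset.sum_eq_zero; intro q hq
    exact xi_block_sum n hstar x b hb hh1 hh1n q (mem_range.mp hq)
end

section
/- Every oracle satisfying the promise of the Bernstein–Vazirani Parity Problem with a nonzero key also satisfies the Haar promise: if x: {0,...,2^n-1} → {0,1} is given by x_i = i · k (bitwise inner product mod 2) for some nonzero k ∈ {0,1}^n, then x satisfies the Haar promise with parameter h* equal to one plus the position of the least significant nonzero bit of k (bits indexed from 0). -/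
open Finset

/-- The Bernstein–Vazirani oracle x_i = i · k (bitwise inner product mod 2). -/
def bvOracle (n k : ℕ) : Fin (2 ^ n) → Bool :=
  fun i => decide (Odd (∑ j ∈ Finset.range n,
    if Nat.testBit (i : ℕ) j && Nat.testBit k j then 1 else 0))

/-! Let `v` be the position of the lowest set bit of `k`. Since `k` has no bits below `v`,
`i · k = i_v ⊕ ⨁_{j > v} i_j k_j`. The second summand depends only on `i / 2^(v+1)`, the index
of the block of length `2^(v+1)` containing `i`, so it is the bit `b_l` of that block, while
`i_v` is `0` on the first half of every block and `1` on the second half. -/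

namespace Nat

theorem testBit_eq_false_of_lt_padicValNat {k j : ℕ} (hj : j < padicValNat 2 k) :
    k.testBit j = false := by
  have hdvd : 2 ^ (j + 1) ∣ k := (pow_dvd_pow 2 hj).trans pow_padicValNat_dvd
  have := Nat.testBit_mod_two_pow k (j + 1) j
  simp only [Nat.mod_eq_zero_of_dvd hdvd, Nat.zero_testBit, Nat.lt_add_one, decide_true,
    Bool.true_and] at this
  exact this.symm

theorem testBit_padicValNat {k : ℕ} (hk : k ≠ 0) : k.testBit (padicValNat 2 k) = true := by
  have hodd : Odd (k / 2 ^ padicValNat 2 k) := by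
    rw [← Nat.coprime_two_left, ← Nat.factorization_def k Nat.prime_two]
    exact Nat.coprime_ordCompl Nat.prime_two hk
  simpa [Nat.testBit_eq_decide_div_mod_eq, Nat.odd_iff] using hodd

theorem padicValNat_lt_of_lt_two_pow {k n : ℕ} (hk : k ≠ 0) (hkn : k < 2 ^ n) :
    padicValNat 2 k < n :=
  (padicValNat_le_nat_log k).trans_lt (Nat.log_lt_of_lt_pow hk hkn)

theorem testBit_eq_of_div_two_pow_eq {a b m j : ℕ} (h : a / 2 ^ m = b / 2 ^ m) (hj : m ≤ j) :
    a.testBit j = b.testBit j := by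
  obtain ⟨d, rfl⟩ := Nat.exists_eq_add_of_le hj
  rw [add_comm m d, ← Nat.testBit_div_two_pow, h, Nat.testBit_div_two_pow]

theorem testBit_of_div_two_pow_eq {a m q : ℕ} {e : Bool} (h : a / 2 ^ m = 2 * q + e.toNat) :
    a.testBit m = e := by
  cases e <;> simp [Nat.testBit_eq_decide_div_mod_eq, h]

end Nat

def bitDotParity (n k m i : ℕ) : Bool :=
  decide (Odd (∑ j ∈ Ico m n, if i.testBit j && k.testBit j then 1 else 0))

theorem bvOracle_eq_bitDotParity (n k : ℕ) (i : Fin (2 ^ n)) :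
    bvOracle n k i = bitDotParity n k 0 i := by
  rw [bvOracle, bitDotParity, range_eq_Ico]

theorem bitDotParity_eq_of_testBit_eq_false {n k m m' i : ℕ} (hm : m ≤ m') (hm' : m' ≤ n)
    (h : ∀ j, m ≤ j → j < m' → k.testBit j = false) :
    bitDotParity n k m i = bitDotParity n k m' i := by
  rw [bitDotParity, ← sum_Ico_consecutive _ hm hm', sum_eq_zero, zero_add, bitDotParity]
  intro j hj
  rw [mem_Ico] at hj
  simp [h j hj.1 hj.2]

theorem bitDotParity_eq_xor {n k m : ℕ} (hm : m < n) (i : ℕ) :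
    bitDotParity n k m i = ((i.testBit m && k.testBit m) ^^ bitDotParity n k (m + 1) i) := by
  rw [bitDotParity, sum_eq_sum_Ico_succ_bot hm, bitDotParity]
  cases i.testBit m && k.testBit m <;> simp [add_comm 1, Nat.odd_add_one, - Nat.not_odd_iff_even]

theorem bitDotParity_congr_div {n k m a b : ℕ} (h : a / 2 ^ m = b / 2 ^ m) :
    bitDotParity n k m a = bitDotParity n k m b := by
  unfold bitDotParity
  congr 2
  refine sum_congr rfl fun j hj => ?_
  rw [Nat.testBit_eq_of_div_two_pow_eq h (mem_Ico.mp hj).1]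

section LowestSetBit

variable {n k v : ℕ} (hv : v < n) (hlow : ∀ j < v, k.testBit j = false)
  (hkv : k.testBit v = true)
include hv hlow hkv

theorem bvOracle_eq_xor (i : Fin (2 ^ n)) :
    bvOracle n k i = ((i : ℕ).testBit v ^^ bitDotParity n k (v + 1) i) := by
  rw [bvOracle_eq_bitDotParity, bitDotParity_eq_of_testBit_eq_false (Nat.zero_le v) hv.le
    fun j _ hj => hlow j hj, bitDotParity_eq_xor hv, hkv, Bool.and_true]

theorem bvOracle_eq_of_div_two_pow_eq {q : ℕ} {i : Fin (2 ^ n)} {e : Bool}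
    (hi : (i : ℕ) / 2 ^ v = 2 * q + e.toNat) :
    bvOracle n k i = (e ^^ bitDotParity n k (v + 1) (2 ^ (v + 1) * q)) := by
  have hblock : (i : ℕ) / 2 ^ (v + 1) = 2 ^ (v + 1) * q / 2 ^ (v + 1) := by
    rw [pow_succ, ← Nat.div_div_eq_div_mul, hi, Nat.mul_add_div two_pos,
      Nat.div_eq_of_lt (Bool.toNat_lt e), add_zero, ← pow_succ,
      Nat.mul_div_cancel_left _ (Nat.two_pow_pos _)]
  rw [bvOracle_eq_xor hv hlow hkv, Nat.testBit_of_div_two_pow_eq hi, bitDotParity_congr_div hblock]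

end LowestSetBit

/-- Every Bernstein–Vazirani oracle with nonzero key k < 2^n satisfies the
Haar promise with parameter h* = 1 + (position of the least significant
nonzero bit of k). -/
theorem bv_oracle_satisfies_haar_promise (n k : ℕ) (hk : 0 < k)
    (hkn : k < 2 ^ n) :
    HaarPromise n (padicValNat 2 k + 1) (bvOracle n k) := by
  set v := padicValNat 2 k
  have hv : v < n := Nat.padicValNat_lt_of_lt_two_pow hk.ne' hkn
  have hlow : ∀ j < v, k.testBit j = false := fun _ => Nat.testBit_eq_false_of_lt_padicValNat
  have hkv : k.testBit v = true := Nat.testBit_padicValNat hk.ne'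
  refine ⟨by omega, hv, fun l => bitDotParity n k (v + 1) (2 ^ (v + 1) * (l - 1)), ?_⟩
  rintro l hl - i
  obtain ⟨q, rfl⟩ : ∃ q, l = q + 1 := ⟨l - 1, by omega⟩
  simp only [Nat.add_sub_cancel, show 2 * (q + 1) - 1 = 2 * q + 1 by omega, pow_succ]
  constructor
  · rintro ⟨hlo, hhi⟩
    have hi : (i : ℕ) / 2 ^ v = 2 * q + false.toNat :=
      Nat.div_eq_of_lt_le (by rw [Bool.toNat_false]; linarith) (by rw [Bool.toNat_false]; linarith)
    simpa [pow_succ] using bvOracle_eq_of_div_two_pow_eq hv hlow hkv hi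
  · rintro ⟨hlo, hhi⟩
    have hi : (i : ℕ) / 2 ^ v = 2 * q + true.toNat :=
      Nat.div_eq_of_lt_le (by rw [Bool.toNat_true]; linarith) (by rw [Bool.toNat_true]; linarith)
    simpa [pow_succ] using bvOracle_eq_of_div_two_pow_eq hv hlow hkv hi
end
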